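/- Let p > q be relatively prime positive integers and define f : ℤ → ℚ recursively (on the value of p) by the Ozsváth–Szabó lens space formula: for 0 ≤ i < p+q, f_{p,q}(i mod p) = (pq - (2i+1-p-q)^2)/(4pq) - f_{q, p mod q}(i mod q) (with the convention that the recursion terminates). Then for all 0 ≤ i < p, f_{p,q}((i+q) mod p) - f_{p,q}(i mod p) = (p - 1 - 2i)/p. -/
import Mathlib

/-- Ozsváth–Szabó inductive lens space grading formula implies the non-inductive
relative grading formula: if `fpq` and `fq` satisfy the recursion
`fpq (i % p) = (pq - (2i+1-p-q)^2)/(4pq) - fq (i % q)` for `0 ≤ i < p + q`,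
then `fpq ((i+q) % p) - fpq (i % p) = (p - 1 - 2i)/p` for `0 ≤ i < p`. -/
theorem stmt0 (p q : ℤ) (hq : 0 < q) (hqp : q < p) (hcop : Int.gcd p q = 1)
    (fpq fq : ℤ → ℚ)
    (hrec : ∀ i : ℤ, 0 ≤ i → i < p + q →
      fpq (i % p) = ((p * q - (2 * i + 1 - p - q) ^ 2 : ℤ) : ℚ) / ((4 * p * q : ℤ) : ℚ)
        - fq (i % q)) :
    ∀ i : ℤ, 0 ≤ i → i < p →
      fpq ((i + q) % p) - fpq (i % p) = ((p - 1 - 2 * i : ℤ) : ℚ) / ((p : ℤ) : ℚ) := by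
  intro i hi hip
  have h1 := hrec (i + q) (by linarith) (by linarith)
  have h2 := hrec i (by linarith) (by linarith)
  have hmod : (i + q) % q = i % q := by simpa using Int.add_mul_emod_self_left (a := i) (b := q) (c := 1)
  rw [h1, h2, hmod]
  have hp0 : ((p : ℚ)) ≠ 0 := by exact_mod_cast (by linarith : p ≠ 0)
  have hq0 : ((q : ℚ)) ≠ 0 := by exact_mod_cast hq.ne'
  push_cast
  field_simp
  ring
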